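/- arXiv:1905.00057 — 3 statements merged into one kernel-verified Lean document; each statement's English description precedes it below -/
import Mathlib

section
/- The characteristic polynomial of the multiplier matrix of the four-state Grover walk, M(θ₁,θ₂) = (1/2)·diag(e^{iθ₁}, e^{−iθ₁}, e^{iθ₂}, e^{−iθ₂}) applied row-wise to G₄, equals (λ² − 1)(λ² + (cos θ₁ + cos θ₂)λ + 1). -/
/-!
Writing `J` for the all-ones matrix, `diag(d) (c J - 1) = -diag(d) + (c d) 1ᵀ` is a rank-one
perturbation of a diagonal matrix, so by the matrix determinant lemma its characteristic
polynomial is `P - c ∑ᵢ dᵢ ∏_{j ≠ i} (X + dⱼ)` with `P = ∏ᵢ (X + dᵢ)`, i.e. `c X P' + (1 - c n) P`.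
For the Grover walk `c = 1/2`, `n = 4` and `P = Q₁ Q₂` with `Qₖ = X² + 2 cos θₖ X + 1`; since
`X Qₖ' - Qₖ = X² - 1`, the polynomial `X P' / 2 - P` equals `(X² - 1) (Q₁ + Q₂) / 2`.
-/

open Matrix Polynomial Finset

section MatrixDeterminantLemma

variable {n : Type*} [Fintype n] [DecidableEq n]

theorem det_diagonal_add_replicateCol_mul_replicateRow_of_field {K : Type*} [Field K]
    {a : n → K} (ha : ∀ i, a i ≠ 0) (u v : n → K) :
    (diagonal a + replicateCol Unit u * replicateRow Unit v).det =
      ∏ i, a i + ∑ i, u i * v i * ∏ j ∈ univ.erase i, a j := by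
  have hdet : IsUnit (diagonal a).det := by
    simpa [det_diagonal, prod_ne_zero_iff, isUnit_iff_ne_zero] using ha
  have hinv : (diagonal a)⁻¹ = diagonal fun i => (a i)⁻¹ :=
    inv_eq_left_inv (by simp [diagonal_mul_diagonal, inv_mul_cancel₀ (ha _)])
  rw [det_add_replicateCol_mul_replicateRow hdet, hinv, det_unique (n := Unit), det_diagonal]
  simp only [Matrix.add_apply, one_apply_eq, mul_apply, replicateRow_apply, replicateCol_apply,
    diagonal_apply, mul_ite, mul_zero, sum_ite_eq', mem_univ, if_true, mul_add, mul_one, mul_sum]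
  congr 1
  refine sum_congr rfl fun i _ => ?_
  rw [← mul_prod_erase univ a (mem_univ i)]
  field_simp [ha i]

theorem det_diagonal_add_replicateCol_mul_replicateRow {R : Type*} [CommRing R] [IsDomain R]
    {a : n → R} (ha : ∀ i, a i ≠ 0) (u v : n → R) :
    (diagonal a + replicateCol Unit u * replicateRow Unit v).det =
      ∏ i, a i + ∑ i, u i * v i * ∏ j ∈ univ.erase i, a j := by
  let φ := algebraMap R (FractionRing R)
  have hφ : Function.Injective φ := IsFractionRing.injective R (FractionRing R)
  apply hφ
  convert det_diagonal_add_replicateCol_mul_replicateRow_of_field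
    (fun i => (map_ne_zero_iff φ hφ).2 (ha i)) (φ ∘ u) (φ ∘ v) using 2
  · rw [RingHom.map_det, RingHom.mapMatrix_apply]
    congr 1
    ext i j
    simp [diagonal_apply, apply_ite φ, mul_apply]
  · simp [map_prod]

end MatrixDeterminantLemma

section DiagonalTimesRankOnePerturbation

variable {n : Type*} [Fintype n] [DecidableEq n] {R : Type*} [CommRing R]

theorem sum_C_mul_prod_erase_X_add_C (d : n → R) :
    ∑ i, C (d i) * ∏ j ∈ univ.erase i, (X + C (d j)) =
      Fintype.card n • ∏ i, (X + C (d i)) - X * derivative (∏ i, (X + C (d i))) := by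
  have hterm : ∀ i, C (d i) * ∏ j ∈ univ.erase i, (X + C (d j)) =
      ∏ j, (X + C (d j)) - X * ∏ j ∈ univ.erase i, (X + C (d j)) := fun i => by
    rw [← mul_prod_erase univ _ (mem_univ i)]; ring
  simp only [hterm, sum_sub_distrib, sum_const, card_univ, derivative_prod_finset,
    derivative_X_add_C, mul_one, mul_sum]

theorem charmatrix_diagonal_mul_smul_allOnes_sub_one (d : n → R) (c : R) :
    charmatrix (diagonal d * (c • of (fun _ _ => (1 : R)) - 1)) =
      diagonal (fun i => X + C (d i)) +
        replicateCol Unit (fun i => -C (c * d i)) * replicateRow Unit (fun _ => (1 : R[X])) := by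
  ext i j : 1
  rcases eq_or_ne i j with rfl | hij
  · simp only [smul_of, charmatrix_apply_eq, mul_apply, diagonal_apply, Matrix.sub_apply, of_apply,
      Pi.smul_apply, smul_eq_mul, mul_one, ite_mul, zero_mul, sum_ite_eq, mem_univ, ↓reduceIte,
      one_apply_eq, map_mul, map_sub, map_one, Matrix.add_apply, univ_unique,
      PUnit.default_eq_unit, replicateCol_apply, replicateRow_apply, sum_neg_distrib, sum_const,
      card_singleton, one_smul]
    ring
  · simp [mul_apply, diagonal_apply, hij, mul_comm]

theorem charpoly_diagonal_mul_smul_allOnes_sub_one [IsDomain R] (d : n → R) (c : R) :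
    (diagonal d * (c • of (fun _ _ => (1 : R)) - 1)).charpoly =
      C c * X * derivative (∏ i, (X + C (d i))) +
        C (1 - c * Fintype.card n) * ∏ i, (X + C (d i)) := by
  rw [charpoly, charmatrix_diagonal_mul_smul_allOnes_sub_one,
    det_diagonal_add_replicateCol_mul_replicateRow fun i => X_add_C_ne_zero (d i)]
  simp only [mul_one, neg_mul, map_mul, sum_neg_distrib, mul_assoc, ← mul_sum,
    sum_C_mul_prod_erase_X_add_C, map_sub, map_one, map_natCast, nsmul_eq_mul]
  ring

end DiagonalTimesRankOnePerturbation

section Grover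

variable {K : Type*} [Field K]

theorem X_add_C_mul_X_add_C_inv {a : K} (ha : a ≠ 0) :
    (X + C a) * (X + C a⁻¹) = X ^ 2 + C (a + a⁻¹) * X + 1 := by
  have h : C a * C a⁻¹ = 1 := by rw [← C_mul, mul_inv_cancel₀ ha, C_1]
  rw [C_add]
  linear_combination h

theorem charpoly_diagonal_inv_pairs_mul_grover4 (h2 : (2 : K) ≠ 0) {a b : K}
    (ha : a ≠ 0) (hb : b ≠ 0) :
    (diagonal ![a, a⁻¹, b, b⁻¹] * ((2⁻¹ : K) • of (fun _ _ => 1) - 1)).charpoly =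
      (X ^ 2 - 1) * (X ^ 2 + C ((a + a⁻¹ + b + b⁻¹) / 2) * X + 1) := by
  have hP : ∏ i, (X + C (![a, a⁻¹, b, b⁻¹] i)) =
      (X ^ 2 + C (a + a⁻¹) * X + 1) * (X ^ 2 + C (b + b⁻¹) * X + 1) := by
    rw [Fin.prod_univ_four, ← X_add_C_mul_X_add_C_inv ha, ← X_add_C_mul_X_add_C_inv hb]
    simp [mul_assoc]
  set Q₁ : K[X] := X ^ 2 + C (a + a⁻¹) * X + 1
  set Q₂ : K[X] := X ^ 2 + C (b + b⁻¹) * X + 1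
  have hQ : ∀ s : K, X * derivative (X ^ 2 + C s * X + 1) = (X ^ 2 + C s * X + 1) + X ^ 2 - 1 :=
    fun s => by
      simp only [derivative_X_pow_succ, Nat.cast_one, map_add, map_one, pow_one,
        derivative_mul, derivative_C, zero_mul, derivative_X, mul_one, zero_add, derivative_one,
        add_zero]
      ring
  have hcoeff : C (1 - 2⁻¹ * (Fintype.card (Fin 4) : K)) = -1 := by
    rw [Fintype.card_fin, ← C_1, ← C_neg]; congr 1; field_simp; norm_num
  have hhalf : C (2⁻¹ : K) * 2 = 1 := by
    rw [← C_ofNat, ← C_mul, inv_mul_cancel₀ h2, C_1]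
  have hmean : C ((a + a⁻¹ + b + b⁻¹) / 2) = C 2⁻¹ * (C (a + a⁻¹) + C (b + b⁻¹)) := by
    rw [div_eq_inv_mul, add_assoc (a + a⁻¹), C_mul, C_add]
  rw [charpoly_diagonal_mul_smul_allOnes_sub_one, hP, hcoeff, derivative_mul, hmean]
  linear_combination C (2⁻¹ : K) * Q₂ * hQ (a + a⁻¹) + C (2⁻¹ : K) * Q₁ * hQ (b + b⁻¹) +
    (Q₁ * Q₂ + (X ^ 2 - 1) * (X ^ 2 + 1)) * hhalf

end Grover

open Complex Polynomial in
/-- The characteristic polynomial of the multiplier matrix of the four-state Grover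
walk equals `(λ² − 1)(λ² + (cos θ₁ + cos θ₂)λ + 1)`. -/
theorem grover4_multiplier_charpoly (θ₁ θ₂ : ℝ) :
    let G : Matrix (Fin 4) (Fin 4) ℂ :=
      (1 / 2 : ℂ) • Matrix.of ![![-1, 1, 1, 1], ![1, -1, 1, 1],
        ![1, 1, -1, 1], ![1, 1, 1, -1]]
    let dvec : Fin 4 → ℂ :=
      ![exp (I * θ₁), exp (-(I * θ₁)), exp (I * θ₂), exp (-(I * θ₂))]
    let M : Matrix (Fin 4) (Fin 4) ℂ := Matrix.of fun i j => dvec i * G i j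
    M.charpoly = (X ^ 2 - 1) *
      (X ^ 2 + C ((Real.cos θ₁ + Real.cos θ₂ : ℝ) : ℂ) * X + 1) := by
  intro G dvec M
  have hM : M = diagonal ![exp (I * θ₁), (exp (I * θ₁))⁻¹, exp (I * θ₂), (exp (I * θ₂))⁻¹] *
      ((2⁻¹ : ℂ) • of (fun _ _ => 1) - 1) := by
    ext i j
    rw [diagonal_mul]
    fin_cases i <;> fin_cases j <;> norm_num [M, G, dvec, exp_neg]
  have hcos : ((Real.cos θ₁ + Real.cos θ₂ : ℝ) : ℂ) =
      (exp (I * θ₁) + (exp (I * θ₁))⁻¹ + exp (I * θ₂) + (exp (I * θ₂))⁻¹) / 2 := by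
    push_cast
    rw [cos, cos, ← exp_neg, ← exp_neg, mul_comm I, mul_comm I, neg_mul, neg_mul]
    ring
  rw [hM, hcos]
  exact charpoly_diagonal_inv_pairs_mul_grover4 two_ne_zero (exp_ne_zero _) (exp_ne_zero _)
end

section
/- The map (θ₁, θ₂) ↦ (sin θ₁, sin θ₂)/√(4 − (cos θ₁ + cos θ₂)²), defined where (cos θ₁+cos θ₂)² < 4, is surjective onto the open disk {(X₁,X₂) : 2X₁² + 2X₂² < 1}. -/
/-!
The expression `sin θᵢ / √(4 - (cos θ₁ + cos θ₂)²)` is homogeneous of degree zero in the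
points `zᵢ = ρ e^{iθᵢ}` of a common circle of radius `ρ`: it equals
`Im zᵢ / √(4ρ² - (Re z₁ + Re z₂)²)`. So it suffices to find two points of equal norm with the
prescribed imaginary parts up to a common factor. With `a = X₁²`, `b = X₂²`,
`τ = 1 - 2a - 2b > 0`, the points `z₁ = (1 - 3a - b, 2X₁√τ)` and `z₂ = (a + 3b - 1, 2X₂√τ)`
both have squared norm `τ + (a - b)²`, and `4ρ² - (Re z₁ + Re z₂)² = 4τ`.
-/

open Complex Real

namespace Complex

variable {z₁ z₂ : ℂ}

lemma four_sub_sq_cos_arg_add_cos_arg (h : ‖z₁‖ = ‖z₂‖) (hz₁ : z₁ ≠ 0) :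
    4 - (Real.cos (arg z₁) + Real.cos (arg z₂)) ^ 2 =
      (4 * ‖z₁‖ ^ 2 - (z₁.re + z₂.re) ^ 2) / ‖z₁‖ ^ 2 := by
  have hz₂ : z₂ ≠ 0 := norm_ne_zero_iff.mp (h ▸ norm_ne_zero_iff.mpr hz₁)
  have hpos : 0 < ‖z₁‖ := norm_pos_iff.mpr hz₁
  rw [cos_arg hz₁, cos_arg hz₂, ← h]
  field_simp

lemma sin_arg_div_sqrt_four_sub_sq_cos_arg_add_cos_arg (h : ‖z₁‖ = ‖z₂‖) (hz₁ : z₁ ≠ 0)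
    {w : ℂ} (hw : ‖w‖ = ‖z₁‖) :
    Real.sin (arg w) / √(4 - (Real.cos (arg z₁) + Real.cos (arg z₂)) ^ 2) =
      w.im / √(4 * ‖z₁‖ ^ 2 - (z₁.re + z₂.re) ^ 2) := by
  have hpos : 0 < ‖z₁‖ := norm_pos_iff.mpr hz₁
  rw [four_sub_sq_cos_arg_add_cos_arg h hz₁, sqrt_div' _ (by positivity), sqrt_sq hpos.le,
    sin_arg, hw, div_div_div_cancel_right₀ hpos.ne']

end Complex

/-- The parameterization of the four-state Grover walk's region of polynomial decay
is surjective onto the open disk `2X₁² + 2X₂² < 1`. -/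
theorem grover4_decay_region_surjective (X₁ X₂ : ℝ)
    (hX : 2 * X₁ ^ 2 + 2 * X₂ ^ 2 < 1) :
    ∃ θ₁ θ₂ : ℝ, (Real.cos θ₁ + Real.cos θ₂) ^ 2 < 4 ∧
      Real.sin θ₁ / Real.sqrt (4 - (Real.cos θ₁ + Real.cos θ₂) ^ 2) = X₁ ∧
      Real.sin θ₂ / Real.sqrt (4 - (Real.cos θ₁ + Real.cos θ₂) ^ 2) = X₂ := by
  set a := X₁ ^ 2
  set b := X₂ ^ 2
  set τ := 1 - 2 * a - 2 * b
  have hτ : 0 < τ := by linarith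
  have hsqrtτ : √τ ^ 2 = τ := sq_sqrt hτ.le
  set z₁ : ℂ := ⟨1 - 3 * a - b, 2 * X₁ * √τ⟩
  set z₂ : ℂ := ⟨a + 3 * b - 1, 2 * X₂ * √τ⟩
  have hnorm₁ : ‖z₁‖ ^ 2 = τ + (a - b) ^ 2 := by
    rw [Complex.sq_norm, normSq_mk]; linear_combination 4 * a * hsqrtτ
  have hnorm₂ : ‖z₂‖ ^ 2 = τ + (a - b) ^ 2 := by
    rw [Complex.sq_norm, normSq_mk]; linear_combination 4 * b * hsqrtτ
  have hnorm : ‖z₁‖ = ‖z₂‖ := by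
    rwa [← hnorm₂, sq_eq_sq₀ (norm_nonneg _) (norm_nonneg _)] at hnorm₁
  have hz₁ : z₁ ≠ 0 := norm_ne_zero_iff.mp (by nlinarith)
  have hdisc : 4 * ‖z₁‖ ^ 2 - (z₁.re + z₂.re) ^ 2 = (2 * √τ) ^ 2 := by
    rw [hnorm₁]; linear_combination (-4) * hsqrtτ
  have h2sqrtτ : 0 < 2 * √τ := by positivity
  refine ⟨arg z₁, arg z₂, ?_, ?_, ?_⟩
  · rw [← sub_pos, four_sub_sq_cos_arg_add_cos_arg hnorm hz₁, hdisc]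
    positivity
  · rw [sin_arg_div_sqrt_four_sub_sq_cos_arg_add_cos_arg hnorm hz₁ rfl, hdisc, sqrt_sq h2sqrtτ.le]
    exact div_eq_of_eq_mul h2sqrtτ.ne' (by ring)
  · rw [sin_arg_div_sqrt_four_sub_sq_cos_arg_add_cos_arg hnorm hz₁ hnorm.symm, hdisc,
      sqrt_sq h2sqrtτ.le]
    exact div_eq_of_eq_mul h2sqrtτ.ne' (by ring)
end

section
/- The characteristic polynomial of the 6×6 multiplier matrix of the hexagonal Grover walk equals (λ² − 1)·(λ⁴ − (2/9)(4cos 2θ₂ + 8cos 3θ₁ cos θ₂ − 3)λ² + 1). -/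
/-!
After listing the three sites of each sublattice consecutively, the multiplier is the block
matrix `[[0, D₁G₃], [D₂G₃, 0]]`, so its characteristic polynomial is `χ(λ²)` where `χ` is
the characteristic polynomial of the 3×3 matrix `D₁G₃D₂G₃`. Writing `u = e^{iθ₁}`,
`v = e^{iθ₂}`, a direct 3×3 determinant computation gives `χ(μ) = (μ - 1)(μ² - tμ + 1)`
with `t = (2/9)(2(v² + v⁻²) + 2(u³ + u⁻³)(v + v⁻¹) - 3)`, which is the cosine expression.
-/

open Matrix Polynomial

namespace Matrix

variable {R : Type*} [CommRing R] {n : Type*} [Fintype n] [DecidableEq n]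

theorem charpoly_comp_X_sq (N : Matrix n n R) :
    N.charpoly.comp (X ^ 2) = (scalar n (X ^ 2 : R[X]) - N.map C).det := by
  rw [charpoly, ← coe_compRingHom_apply, RingHom.map_det]
  congr 1
  ext i j
  by_cases h : i = j <;> simp [h]

theorem charpoly_fromBlocks_zero₁₁_zero₂₂ (A B : Matrix n n R) :
    (fromBlocks 0 A B 0).charpoly = (A * B).charpoly.comp (X ^ 2) := by
  have hX : Commute (scalar n (X : R[X])) (A.map C) := scalar_commute _ (Commute.all _) _
  -- `X` is not invertible in `R[X]`, so instead of a Schur complement we clear the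
  -- top-right block by a left multiplication and cancel the monic factor `X ^ card n`.
  have key : fromBlocks (scalar n X) (A.map C) 0 1 * charmatrix (fromBlocks 0 A B 0) =
      fromBlocks (scalar n (X ^ 2) - (A * B).map C) 0 (-B.map C) (scalar n X) := by
    simp only [charmatrix_fromBlocks, charmatrix_zero, fromBlocks_multiply, Matrix.map_mul,
      pow_two, map_mul, mul_neg, hX.eq, zero_mul, one_mul, neg_add_cancel, ← sub_eq_add_neg,
      zero_sub, neg_zero, zero_add]
  have hdet := congrArg det key
  rw [det_mul, det_fromBlocks_zero₂₁, det_fromBlocks_zero₁₂, det_one, mul_one, scalar_apply,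
    det_diagonal, Finset.prod_const, Finset.card_univ, ← charpoly_comp_X_sq,
    mul_comm _ (X ^ _)] at hdet
  exact (monic_X_pow _).isRegular.left hdet

end Matrix

noncomputable def groverCoin (n : ℕ) : Matrix (Fin n) (Fin n) ℂ :=
  (2 / n : ℂ) • of (fun _ _ => 1) - 1

theorem reindex_diagonal_mul_swap_groverCoin (d : Fin 6 → ℂ) :
    reindex finSumFinEquiv.symm finSumFinEquiv.symm
      (of fun i j : Fin 6 => d i *
        if (i.val < 3) = (j.val < 3) then 0
        else if i.val % 3 = j.val % 3 then -(1 / 3) else 2 / 3) =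
    fromBlocks 0 (diagonal (d ∘ Fin.castAdd 3) * groverCoin 3)
      (diagonal (d ∘ Fin.natAdd 3) * groverCoin 3) 0 := by
  ext (i | i) (j | j) <;> fin_cases i <;> fin_cases j <;>
    norm_num [groverCoin, diagonal_mul, one_apply, finSumFinEquiv]

theorem charpoly_hexagonal_block_product (u v : ℂ) (hu : u ≠ 0) (hv : v ≠ 0) :
    (diagonal ![u ^ 2, v / u, (u * v)⁻¹] * groverCoin 3 *
        (diagonal ![(u ^ 2)⁻¹, u / v, u * v] * groverCoin 3)).charpoly =
      (X - 1) * (X ^ 2 -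
        C (2 / 9 * (2 * (v ^ 2 + (v ^ 2)⁻¹) + 2 * (u ^ 3 + (u ^ 3)⁻¹) * (v + v⁻¹) - 3)) * X +
          1) := by
  refine Polynomial.funext fun t => ?_
  rw [eval_charpoly, det_fin_three]
  simp only [Nat.succ_eq_add_one, Nat.reduceAdd, scalar_apply, _root_.mul_inv_rev, groverCoin,
    Nat.cast_ofNat, smul_of, Fin.isValue, Matrix.sub_apply, diagonal_apply_eq, mul_apply,
    diagonal_apply, cons_val_zero, of_apply, Pi.smul_apply, smul_eq_mul, mul_one, one_apply,
    ite_mul, zero_mul, Finset.sum_ite_eq, Finset.mem_univ, ↓reduceIte, Fin.sum_univ_three,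
    zero_ne_one, sub_zero, cons_val_one, one_ne_zero, Fin.reduceEq, cons_val, zero_sub,
    neg_add_rev, map_mul, map_sub, map_add,
    map_pow, eval_mul, eval_sub, eval_X, eval_one, eval_add, eval_pow, eval_C]
  field_simp
  ring

open Complex in
theorem ofReal_cos_nat_mul_eq (θ : ℝ) (k : ℕ) :
    (Real.cos (k * θ) : ℂ) = (exp (θ * I) ^ k + (exp (θ * I) ^ k)⁻¹) / 2 := by
  rw [ofReal_cos, cos, ← exp_nat_mul, ← exp_neg]
  push_cast
  ring_nf

open Complex Polynomial in
/-- The characteristic polynomial of the 6×6 multiplier matrix of the hexagonal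
Grover walk (coin `X ⊗ G₃`) equals
`(λ² − 1)(λ⁴ − (2/9)(4cos 2θ₂ + 8cos 3θ₁ cos θ₂ − 3)λ² + 1)`. -/
theorem hexagonal_multiplier_charpoly (θ₁ θ₂ : ℝ) :
    let K : Matrix (Fin 6) (Fin 6) ℂ := Matrix.of fun i j =>
      if (i.val < 3) = (j.val < 3) then 0
      else if i.val % 3 = j.val % 3 then -(1 / 3) else 2 / 3
    let dvec : Fin 6 → ℂ :=
      ![exp (2 * I * θ₁), exp (I * (θ₂ - θ₁)), exp (-(I * (θ₁ + θ₂))),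
        exp (-(2 * I * θ₁)), exp (I * (θ₁ - θ₂)), exp (I * (θ₁ + θ₂))]
    let M : Matrix (Fin 6) (Fin 6) ℂ := Matrix.of fun i j => dvec i * K i j
    M.charpoly = (X ^ 2 - 1) *
      (X ^ 4 -
        C (((2 / 9) * (4 * Real.cos (2 * θ₂) +
          8 * Real.cos (3 * θ₁) * Real.cos θ₂ - 3) : ℝ) : ℂ) * X ^ 2 + 1) := by
  intro K dvec M
  set u := exp (θ₁ * I)
  set v := exp (θ₂ * I)
  have hblocks : reindex finSumFinEquiv.symm finSumFinEquiv.symm M =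
      fromBlocks 0 (diagonal (dvec ∘ Fin.castAdd 3) * groverCoin 3)
        (diagonal (dvec ∘ Fin.natAdd 3) * groverCoin 3) 0 :=
    reindex_diagonal_mul_swap_groverCoin dvec
  have hdvec₁ : dvec ∘ Fin.castAdd 3 = ![u ^ 2, v / u, (u * v)⁻¹] := by
    ext i
    fin_cases i <;> simp [dvec, u, v, ← exp_nat_mul, ← exp_neg, ← exp_add, ← exp_sub] <;>
      congr 1 <;> ring
  have hdvec₂ : dvec ∘ Fin.natAdd 3 = ![(u ^ 2)⁻¹, u / v, u * v] := by
    ext i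
    fin_cases i <;> simp [dvec, u, v, ← exp_nat_mul, ← exp_neg, ← exp_add, ← exp_sub] <;>
      congr 1 <;> ring
  have hcoeff : (((2 / 9) * (4 * Real.cos (2 * θ₂) +
        8 * Real.cos (3 * θ₁) * Real.cos θ₂ - 3) : ℝ) : ℂ) =
      2 / 9 * (2 * (v ^ 2 + (v ^ 2)⁻¹) + 2 * (u ^ 3 + (u ^ 3)⁻¹) * (v + v⁻¹) - 3) := by
    have h₁ : (Real.cos θ₂ : ℂ) = (v + v⁻¹) / 2 := by simpa using ofReal_cos_nat_mul_eq θ₂ 1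
    have h₂ := ofReal_cos_nat_mul_eq θ₂ 2
    have h₃ := ofReal_cos_nat_mul_eq θ₁ 3
    push_cast at h₁ h₂ h₃ ⊢
    rw [h₁, h₂, h₃]
    ring
  rw [← charpoly_reindex (finSumFinEquiv (m := 3) (n := 3)).symm, hblocks,
    charpoly_fromBlocks_zero₁₁_zero₂₂, hdvec₁, hdvec₂,
    charpoly_hexagonal_block_product u v (exp_ne_zero _) (exp_ne_zero _), hcoeff]
  simp only [mul_comp, sub_comp, add_comp, pow_comp, X_comp, C_comp, one_comp]
  ring
end
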